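/- arXiv:2506.03933 — 2 statements merged into one kernel-verified Lean document; each statement's English description precedes it below -/
import Mathlib

section
/- The function f(t) = β(t)·√(α(t)/(1 − α(t))) is strictly decreasing on (0, 1), where β(t) = β_min + (β_max − β_min)t is a linear noise schedule with 0 < β_min < β_max and α(t) = exp(−∫₀ᵗ β(s) ds). -/
private lemma sqrt_exp_div (x y : ℝ) (hy : 0 < y) :
    Real.sqrt (Real.exp x / y) = Real.exp (1/2 * x - 1/2 * Real.log y) := by
  rw [Real.sqrt_eq_rpow, Real.rpow_def_of_pos (div_pos (Real.exp_pos x) hy),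
    Real.log_div (Real.exp_ne_zero x) (ne_of_gt hy), Real.log_exp]
  congr 1
  ring

/-- The function `f(t) = β(t)·√(α(t)/(1 − α(t)))` is strictly decreasing on `(0, 1)`,
where `β(t) = β_min + (β_max − β_min)t` is a linear noise schedule with
`0 < β_min < β_max` and `α(t) = exp(−∫₀ᵗ β(s)ds)`. -/
theorem stmt_5 (βmin βmax : ℝ) (hβ0 : 0 < βmin) (hβ : βmin < βmax)
    (β α f : ℝ → ℝ)
    (hβdef : ∀ t, β t = βmin + (βmax - βmin) * t)
    (hαdef : ∀ t, α t = Real.exp (-(βmin * t) - (1/2) * (βmax - βmin) * t ^ 2))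
    (hfdef : ∀ t, f t = β t * Real.sqrt (α t / (1 - α t))) :
    StrictAntiOn f (Set.Ioo 0 1) := by
  have hc : 0 < βmax - βmin := sub_pos.mpr hβ
  set c := βmax - βmin with hcdef
  set E : ℝ → ℝ := fun t => -(βmin * t) - (1/2) * c * t ^ 2 with hEdef
  set g : ℝ → ℝ := fun t => Real.log (βmin + c * t) + (1/2) * E t
      - (1/2) * Real.log (1 - Real.exp (E t)) with hgdef
  have hαE : ∀ t, α t = Real.exp (E t) := fun t => hαdef t
  clear_value c E g
  have hb : ∀ t ∈ Set.Ioo (0:ℝ) 1, 0 < βmin + c * t := fun t ht => by nlinarith [ht.1]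
  have hEneg : ∀ t ∈ Set.Ioo (0:ℝ) 1, E t < 0 := fun t ht => by
    simp only [hEdef]; nlinarith [ht.1]
  have hα1 : ∀ t ∈ Set.Ioo (0:ℝ) 1, Real.exp (E t) < 1 := fun t ht => by
    calc Real.exp (E t) < Real.exp 0 := Real.exp_lt_exp.mpr (hEneg t ht)
    _ = 1 := Real.exp_zero
  -- f = exp ∘ g on Ioo
  have hfeq : ∀ t ∈ Set.Ioo (0:ℝ) 1, f t = Real.exp (g t) := by
    intro t ht
    have h1 := hb t ht
    have h3 : (0:ℝ) < 1 - Real.exp (E t) := by linarith [hα1 t ht]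
    rw [hfdef, hβdef, hαE, sqrt_exp_div _ _ h3]
    simp only [hgdef]
    rw [show Real.log (βmin + c * t) + 1/2 * E t - 1/2 * Real.log (1 - Real.exp (E t))
        = Real.log (βmin + c * t) + (1/2 * E t - 1/2 * Real.log (1 - Real.exp (E t))) by ring,
      Real.exp_add, Real.exp_log h1]
  -- derivative of g
  have hder : ∀ t ∈ Set.Ioo (0:ℝ) 1, HasDerivAt g
      (c / (βmin + c * t) - (βmin + c * t) / 2
        - (1/2) * (Real.exp (E t) * (βmin + c * t) / (1 - Real.exp (E t)))) t := by
    intro t ht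
    have h1 := hb t ht
    have h3 : (0:ℝ) < 1 - Real.exp (E t) := by linarith [hα1 t ht]
    have hE' : HasDerivAt E (-(βmin + c * t)) t := by
      have h : HasDerivAt (fun t : ℝ => -(βmin * t) - (1/2) * c * t ^ 2)
          (-(βmin * 1) - (1/2) * c * (↑2 * t ^ (2-1))) t :=
        (((hasDerivAt_id t).const_mul βmin).neg).sub ((hasDerivAt_pow 2 t).const_mul ((1/2) * c))
      rw [hEdef]
      show HasDerivAt _ _ t
      convert h using 1
      push_cast
      ring
    have hlogβ : HasDerivAt (fun t => Real.log (βmin + c * t)) (c / (βmin + c * t)) t := by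
      have h : HasDerivAt (fun t : ℝ => βmin + c * t) c t := by
        simpa using ((hasDerivAt_id t).const_mul c).const_add βmin
      simpa using h.log (ne_of_gt h1)
    have hexp : HasDerivAt (fun t => Real.exp (E t)) (Real.exp (E t) * -(βmin + c * t)) t :=
      hE'.exp
    have hlog1 : HasDerivAt (fun t => Real.log (1 - Real.exp (E t)))
        ((0 - Real.exp (E t) * -(βmin + c * t)) / (1 - Real.exp (E t))) t :=
      ((hasDerivAt_const t (1:ℝ)).sub hexp).log (ne_of_gt h3)
    have h := (hlogβ.add (hE'.const_mul (1/2:ℝ))).sub (hlog1.const_mul (1/2:ℝ))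
    rw [hgdef]
    show HasDerivAt _ _ t
    convert h using 1
    · rfl
    · rfl
    · rfl
    field_simp
    ring
  -- derivative is negative
  have hneg : ∀ t ∈ Set.Ioo (0:ℝ) 1,
      c / (βmin + c * t) - (βmin + c * t) / 2
        - (1/2) * (Real.exp (E t) * (βmin + c * t) / (1 - Real.exp (E t))) < 0 := by
    intro t ht
    have h1 := hb t ht
    have h3 : (0:ℝ) < 1 - Real.exp (E t) := by linarith [hα1 t ht]
    have hx : 1 - Real.exp (E t) < -(E t) := by
      have := Real.add_one_lt_exp (ne_of_lt (hEneg t ht))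
      linarith
    have hEt : -(E t) = βmin * t + (1/2) * c * t ^ 2 := by
      simp only [hEdef]; ring
    have key : 2 * c * (1 - Real.exp (E t)) < (βmin + c * t) ^ 2 := by
      have h2 : 2 * c * (1 - Real.exp (E t)) < 2 * c * (-(E t)) := by
        have : (0:ℝ) < 2 * c := by linarith
        exact mul_lt_mul_of_pos_left hx this
      rw [hEt] at h2
      nlinarith [mul_pos hβ0 hβ0]
    have heq : c / (βmin + c * t) - (βmin + c * t) / 2
        - (1/2) * (Real.exp (E t) * (βmin + c * t) / (1 - Real.exp (E t)))
        = (2 * c * (1 - Real.exp (E t)) - (βmin + c * t) ^ 2)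
          / (2 * (βmin + c * t) * (1 - Real.exp (E t))) := by
      field_simp
      ring
    rw [heq]
    apply div_neg_of_neg_of_pos
    · linarith
    · positivity
  have hganti : StrictAntiOn g (Set.Ioo 0 1) := by
    apply strictAntiOn_of_deriv_neg (convex_Ioo 0 1)
    · intro t ht
      exact (hder t ht).differentiableAt.continuousAt.continuousWithinAt
    · intro t ht
      rw [interior_Ioo] at ht
      rw [(hder t ht).deriv]
      exact hneg t ht
  intro x hx y hy hxy
  rw [hfeq x hx, hfeq y hy]
  exact Real.exp_lt_exp.mpr (hganti hx hy hxy)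
end

section
/- g(t) = β'(t)/β(t) − (1/2)·β(t)/(1 − α(t)) is strictly negative for all t ∈ (0,1), where β is the linear schedule with 0 < β_min < β_max and α(t) = exp(−∫₀ᵗ β(s)ds). -/
/-- `g(t) = β'(t)/β(t) − (1/2)·β(t)/(1 − α(t))` is strictly negative for all
`t ∈ (0,1)`, where `β(t) = β_min + (β_max − β_min)t` with `0 < β_min < β_max`
and `α(t) = exp(−∫₀ᵗ β(s)ds)`. -/
theorem stmt_9 (βmin βmax : ℝ) (hβ0 : 0 < βmin) (hβ : βmin < βmax)
    (β α g : ℝ → ℝ)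
    (hβdef : ∀ t, β t = βmin + (βmax - βmin) * t)
    (hαdef : ∀ t, α t = Real.exp (-(βmin * t) - (1/2) * (βmax - βmin) * t ^ 2))
    (hgdef : ∀ t, g t = (βmax - βmin) / β t - (1/2) * (β t / (1 - α t))) :
    ∀ t ∈ Set.Ioo (0:ℝ) 1, g t < 0 := by
  intro t ht
  obtain ⟨ht0, ht1⟩ := ht
  have hβt : 0 < β t := by rw [hβdef]; nlinarith
  have hx : 0 < βmin * t + (1/2) * (βmax - βmin) * t ^ 2 := by nlinarith
  have hαpos : 0 < α t := by rw [hαdef]; exact Real.exp_pos _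
  have hkey : 1 - α t < βmin * t + (1/2) * (βmax - βmin) * t ^ 2 := by
    have h := Real.add_one_lt_exp
      (x := -(βmin * t) - (1/2) * (βmax - βmin) * t ^ 2) (by nlinarith)
    rw [hαdef]; linarith
  have h1α : 0 < 1 - α t := by
    have h := Real.exp_lt_exp.2
      (show -(βmin * t) - (1/2) * (βmax - βmin) * t ^ 2 < 0 by nlinarith)
    rw [hαdef]
    simpa using h
  rw [hgdef, sub_neg]
  have hrw : (1/2) * (β t / (1 - α t)) = β t / (2 * (1 - α t)) := by rw [eq_div_iff (by positivity : (2:ℝ) * (1 - α t) ≠ 0)]; field_simp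
  rw [hrw, div_lt_div_iff₀ hβt (by linarith)]
  rw [hβdef]
  nlinarith
end
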